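/- Alikhanov's fractional chain inequality (scalar version): Let α ∈ (0,1) and let u ∈ C¹([0,T];ℝ). Then for all t ∈ (0,T], the Caputo derivative ∂_t^α u(t) = (g_{1-α} * u')(t) satisfies u(t) · ∂_t^α u(t) ≥ (1/2) ∂_t^α (u²)(t). -/

import Mathlib

/-! With `k(τ) = τ^(-α) / Γ(1 - α)`, the defect `u(t) ∂^α u(t) - ½ ∂^α (u²)(t)` equals
`∫₀ᵗ k(t - s) (u(t) - u(s)) u'(s) ds = -∫₀ᵗ k(t - s) w'(s) ds` with `w = (u(t) - u)² / 2 ≥ 0`.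
Integrating by parts on `[0, x]`, the interior term carries `∂ₛ k(t - s) ≥ 0` and the boundary
term at `0` is nonnegative, while the boundary term at `x` is `O((t - x)^(2 - α))` because `u` is
Lipschitz, so it vanishes as `x → t⁻`. -/

open MeasureTheory Set

/-- Riemann–Liouville kernel `g_α(t) = t^(α-1)/Γ(α)`. -/
noncomputable def rlK (α t : ℝ) : ℝ := t ^ (α - 1) / Real.Gamma α

open Filter Topology

lemma rlK_one_sub (α τ : ℝ) : rlK (1 - α) τ = τ ^ (-α) / Real.Gamma (1 - α) := by
  rw [rlK, sub_sub_cancel_left]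

lemma intervalIntegrable_rpow_sub_mul {α a t : ℝ} {f : ℝ → ℝ} (hα : α < 1) (hat : a ≤ t)
    (hf : ContinuousOn f (Icc a t)) :
    IntervalIntegrable (fun s => (t - s) ^ (-α) * f s) volume a t := by
  have hpow : IntervalIntegrable (fun s => (t - s) ^ (-α)) volume a t := by
    simpa using ((intervalIntegral.intervalIntegrable_rpow' (by linarith : (-1 : ℝ) < -α)
      (a := 0) (b := t - a)).comp_sub_left t).symm
  exact hpow.mul_continuousOn (by rwa [uIcc_of_le hat])

lemma hasDerivAt_sub_rpow {α s t : ℝ} (hst : s < t) :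
    HasDerivAt (fun s => (t - s) ^ (-α)) (α * (t - s) ^ (-α - 1)) s := by
  refine (((hasDerivAt_id' s).const_sub t).rpow_const (Or.inl (sub_pos.2 hst).ne')).congr_deriv ?_
  ring

lemma rpow_neg_mul_sq_le {α d e M : ℝ} (hd : 0 < d) (he : |e| ≤ M * d) :
    d ^ (-α) * e ^ 2 ≤ M ^ 2 * d ^ (2 - α) := by
  have he2 : e ^ 2 ≤ M ^ 2 * d ^ 2 := by
    rw [← sq_abs, ← mul_pow]
    exact pow_le_pow_left₀ (abs_nonneg e) he 2
  calc d ^ (-α) * e ^ 2 ≤ d ^ (-α) * (M ^ 2 * d ^ 2) := by gcongr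
    _ = M ^ 2 * d ^ (2 - α) := by
      rw [sub_eq_neg_add, Real.rpow_add hd, Real.rpow_two]
      ring

/-- Integrate by parts with `((c - u)² / 2)' = -(c - u) u'`: the interior term and the boundary
term at `a` are then nonnegative. -/
lemma neg_mul_sq_le_integral_mul_sub_mul_deriv {k k' u u' : ℝ → ℝ} {a x c : ℝ} (hax : a ≤ x)
    (hk : ∀ s ∈ Icc a x, HasDerivAt k (k' s) s) (hk' : ContinuousOn k' (Icc a x))
    (hk'_nonneg : ∀ s ∈ Icc a x, 0 ≤ k' s) (hka : 0 ≤ k a)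
    (hu : ∀ s ∈ Icc a x, HasDerivAt u (u' s) s) (hu' : ContinuousOn u' (Icc a x)) :
    -(k x * (c - u x) ^ 2 / 2) ≤ ∫ s in a..x, k s * ((c - u s) * u' s) := by
  have hv : ∀ s ∈ Icc a x, HasDerivAt (fun s => -((c - u s) ^ 2 / 2)) ((c - u s) * u' s) s := by
    intro s hs
    refine ((((hu s hs).const_sub c).pow 2).div_const 2).neg.congr_deriv ?_
    ring
  have hcont_u : ContinuousOn u (Icc a x) := fun s hs => (hu s hs).continuousAt.continuousWithinAt
  rw [← uIcc_of_le hax] at hk hk' hu' hcont_u hv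
  rw [intervalIntegral.integral_mul_deriv_eq_deriv_mul hk hv hk'.intervalIntegrable
    ((continuousOn_const.sub hcont_u).mul hu').intervalIntegrable]
  have hrest : 0 ≤ ∫ s in a..x, k' s * ((c - u s) ^ 2 / 2) :=
    intervalIntegral.integral_nonneg hax fun s hs => by
      have := hk'_nonneg s hs
      positivity
  have hbdry : 0 ≤ k a * ((c - u a) ^ 2 / 2) := by positivity
  simp only [intervalIntegral.integral_neg, mul_neg] at *
  linarith

lemma integral_sub_rpow_mul_sub_mul_deriv_nonneg {α a t : ℝ} {u u' : ℝ → ℝ} (hα0 : 0 ≤ α)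
    (hα1 : α < 1) (hat : a < t) (hu : ∀ s ∈ Icc a t, HasDerivAt u (u' s) s)
    (hu' : ContinuousOn u' (Icc a t)) :
    0 ≤ ∫ s in a..t, (t - s) ^ (-α) * ((u t - u s) * u' s) := by
  obtain ⟨M, hM⟩ := isCompact_Icc.exists_bound_of_continuousOn hu'
  have hcont_u : ContinuousOn u (Icc a t) := fun s hs => (hu s hs).continuousAt.continuousWithinAt
  have hlip : ∀ x ∈ Icc a t, |u t - u x| ≤ M * (t - x) := by
    intro x hx
    simpa [Real.norm_eq_abs, abs_of_nonneg (sub_nonneg.2 hx.2)] using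
      Convex.norm_image_sub_le_of_norm_hasDerivWithin_le (fun s hs => (hu s hs).hasDerivWithinAt) hM
        (convex_Icc a t) hx (right_mem_Icc.2 hat.le)
  have hbound : ∀ x ∈ Ico a t, -(M ^ 2 * (t - x) ^ (2 - α) / 2) ≤
      ∫ s in a..x, (t - s) ^ (-α) * ((u t - u s) * u' s) := by
    rintro x ⟨hax, hxt⟩
    have hsub : Icc a x ⊆ Icc a t := Icc_subset_Icc_right hxt.le
    calc -(M ^ 2 * (t - x) ^ (2 - α) / 2) ≤ -((t - x) ^ (-α) * (u t - u x) ^ 2 / 2) := by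
          gcongr -(?_ / 2)
          exact rpow_neg_mul_sq_le (sub_pos.2 hxt) (hlip x ⟨hax, hxt.le⟩)
      _ ≤ _ := by
        refine neg_mul_sq_le_integral_mul_sub_mul_deriv hax
          (fun s hs => hasDerivAt_sub_rpow (hs.2.trans_lt hxt)) ?_ ?_
          (Real.rpow_nonneg (sub_nonneg.2 (hax.trans hxt.le)) _)
          (fun s hs => hu s (hsub hs)) (hu'.mono hsub)
        · exact continuousOn_const.mul ((continuousOn_const.sub continuousOn_id).rpow_const
            fun s hs => Or.inl (sub_pos.2 (hs.2.trans_lt hxt)).ne')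
        · exact fun s hs => mul_nonneg hα0 (Real.rpow_nonneg (sub_nonneg.2 (hs.2.trans hxt.le)) _)
  have hF : ContinuousWithinAt (fun x => ∫ s in a..x, (t - s) ^ (-α) * ((u t - u s) * u' s))
      (Iio t) t := by
    have := intervalIntegral.continuousOn_primitive_interval' (a := a)
      (intervalIntegrable_rpow_sub_mul (f := fun s => (u t - u s) * u' s) hα1 hat.le
        ((continuousOn_const.sub hcont_u).mul hu')) left_mem_uIcc
    rw [uIcc_of_le hat.le] at this
    exact (this t (right_mem_Icc.2 hat.le)).mono_of_mem_nhdsWithin (Icc_mem_nhdsLT hat)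
  have hlim : Tendsto (fun x => -(M ^ 2 * (t - x) ^ (2 - α) / 2)) (𝓝[<] t) (𝓝 0) := by
    have hcont : Continuous fun x : ℝ => -(M ^ 2 * (t - x) ^ (2 - α) / 2) :=
      by fun_prop (disch := linarith)
    simpa [Real.zero_rpow (by linarith : (2 : ℝ) - α ≠ 0)] using
      (hcont.tendsto t).mono_left nhdsWithin_le_nhds
  exact le_of_tendsto_of_tendsto hlim hF (eventually_of_mem (Ico_mem_nhdsLT hat) hbound)

lemma mul_integral_sub_half_integral_eq {k u u' : ℝ → ℝ} {a t : ℝ}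
    (h₁ : IntervalIntegrable (fun s => k s * u' s) volume a t)
    (h₂ : IntervalIntegrable (fun s => k s * (u s * u' s)) volume a t) :
    u t * (∫ s in a..t, k s * u' s) - 1 / 2 * ∫ s in a..t, k s * (2 * u s * u' s) =
      ∫ s in a..t, k s * ((u t - u s) * u' s) := by
  have h₂' : IntervalIntegrable (fun s => k s * (2 * u s * u' s)) volume a t := by
    convert h₂.const_mul 2 using 2 with s
    ring
  rw [← intervalIntegral.integral_const_mul, ← intervalIntegral.integral_const_mul,
    ← intervalIntegral.integral_sub (h₁.const_mul _) (h₂'.const_mul _)]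
  congr 1 with s
  ring

theorem alikhanov_scalar_general (α T : ℝ) (hα : α ∈ Set.Ioo (0:ℝ) 1)
    (u u' : ℝ → ℝ) (hu : ∀ t ∈ Set.Icc (0:ℝ) T, HasDerivAt u (u' t) t)
    (hu' : ContinuousOn u' (Set.Icc 0 T)) :
    ∀ t ∈ Set.Ioc (0:ℝ) T,
      u t * (∫ s in (0:ℝ)..t, rlK (1 - α) (t - s) * u' s) ≥
        (1 / 2) * ∫ s in (0:ℝ)..t, rlK (1 - α) (t - s) * (2 * u s * u' s) := by
  rintro t ⟨ht, htT⟩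
  have hsub : Icc 0 t ⊆ Icc 0 T := Icc_subset_Icc_right htT
  have hu_t : ∀ s ∈ Icc 0 t, HasDerivAt u (u' s) s := fun s hs => hu s (hsub hs)
  have hu'_t : ContinuousOn u' (Icc 0 t) := hu'.mono hsub
  have hcont_u : ContinuousOn u (Icc 0 t) :=
    fun s hs => (hu_t s hs).continuousAt.continuousWithinAt
  have hint : ∀ f : ℝ → ℝ, ContinuousOn f (Icc 0 t) →
      IntervalIntegrable (fun s => rlK (1 - α) (t - s) * f s) volume 0 t := fun f hf => by
    simpa only [rlK_one_sub, div_mul_eq_mul_div] using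
      (intervalIntegrable_rpow_sub_mul hα.2 ht.le hf).div_const _
  have hkey : 0 ≤ ∫ s in (0:ℝ)..t, rlK (1 - α) (t - s) * ((u t - u s) * u' s) := by
    simp only [rlK_one_sub, div_mul_eq_mul_div, intervalIntegral.integral_div]
    exact div_nonneg (integral_sub_rpow_mul_sub_mul_deriv_nonneg hα.1.le hα.2 ht hu_t hu'_t)
      (Real.Gamma_pos_of_pos (sub_pos.2 hα.2)).le
  rw [← mul_integral_sub_half_integral_eq (hint _ hu'_t) (hint _ (hcont_u.mul hu'_t))] at hkey
  linarith

/-- Alikhanov's fractional chain inequality (scalar version): for `u ∈ C¹([0,T])` and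
`α ∈ (0,1)`, `u(t) · ∂ₜ^α u(t) ≥ (1/2) ∂ₜ^α (u²)(t)` for all `t ∈ (0,T]`, where
`∂ₜ^α u = g_{1-α} * u'` is the Caputo derivative. -/
theorem alikhanov_scalar (α T : ℝ) (hα : α ∈ Set.Ioo (0:ℝ) 1) (hT : 0 < T)
    (u u' : ℝ → ℝ) (hu : ∀ t ∈ Set.Icc (0:ℝ) T, HasDerivAt u (u' t) t)
    (hu' : ContinuousOn u' (Set.Icc 0 T)) :
    ∀ t ∈ Set.Ioc (0:ℝ) T,
      u t * (∫ s in (0:ℝ)..t, rlK (1 - α) (t - s) * u' s) ≥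
        (1 / 2) * ∫ s in (0:ℝ)..t, rlK (1 - α) (t - s) * (2 * u s * u' s) :=
  alikhanov_scalar_general α T hα u u' hu hu'
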